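/- arXiv:2107.00726 — 3 statements merged into one kernel-verified Lean document; each statement's English description precedes it below -/
import Mathlib

section
/- Let X be a nonempty set and Y ⊆ X nonempty. The semigroup Ω̄(X,Y) = {f : X → X : f(Y) = Y} is regular (every element is regular) if and only if Y is finite. -/
/-!
If `f ∘ g ∘ f = f`, then `f (g y) = y` on the range of `f`; when moreover `f '' Y = Y` and
`g '' Y = Y`, this makes `f` injective on `Y`. For infinite `Y`, the backward shift along an
injective sequence in `Y` maps `Y` onto `Y` without being injective on it, so it is not regular.
For finite `Y`, pick for every point of the range of `f` a preimage, lying in `Y` when the point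
does: the resulting `g` maps `Y` injectively into `Y`, hence onto `Y` by finiteness.
-/

open Set Function

section Regular

variable {α β : Type*}

theorem injOn_image_of_comp_comp_eq {f : α → β} {g : β → α} {s : Set β}
    (hfgf : f ∘ g ∘ f = f) (hs : s ⊆ range f) : InjOn f (g '' s) := by
  have hinv : LeftInvOn f g s := by
    intro y hy
    obtain ⟨x, rfl⟩ := hs hy
    exact congrFun hfgf x
  exact hinv.rightInvOn_image.injOn

theorem exists_mapsTo_leftInvOn_range {f : α → α} {s : Set α} (hf : SurjOn f s s) :
    ∃ g : α → α, MapsTo g s s ∧ LeftInvOn f g (range f) := by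
  have hpre : ∀ z, ∃ w, (z ∈ s → w ∈ s) ∧ (z ∈ range f → f w = z) := by
    intro z
    by_cases hzs : z ∈ s
    · obtain ⟨w, hws, hwz⟩ := hf hzs
      exact ⟨w, fun _ ↦ hws, fun _ ↦ hwz⟩
    by_cases hzf : z ∈ range f
    · obtain ⟨w, hwz⟩ := hzf
      exact ⟨w, fun h ↦ absurd h hzs, fun _ ↦ hwz⟩
    · exact ⟨z, fun h ↦ absurd h hzs, fun h ↦ absurd h hzf⟩
  choose g hgs hgf using hpre
  exact ⟨g, hgs, hgf⟩

theorem Set.Finite.exists_image_eq_comp_comp_eq {f : α → α} {s : Set α} (hs : s.Finite)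
    (hf : f '' s = s) : ∃ g : α → α, g '' s = s ∧ f ∘ g ∘ f = f := by
  obtain ⟨g, hgs, hgf⟩ :=
    exists_mapsTo_leftInvOn_range ((surjOn_image f s).mono subset_rfl hf.symm.subset)
  have hinj : InjOn g s := (hgf.mono (hf.symm.subset.trans (image_subset_range f s))).injOn
  exact ⟨g, ((hs.injOn_iff_bijOn_of_mapsTo hgs).1 hinj).image_eq,
    funext fun x ↦ hgf (mem_range_self x)⟩

end Regular

section ShiftBack

variable {α : Type*} {u : ℕ → α} {s : Set α}

noncomputable def shiftBack (u : ℕ → α) : α → α :=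
  extend (u ∘ Nat.succ) u id

theorem shiftBack_apply_succ (hu : Injective u) (n : ℕ) : shiftBack u (u (n + 1)) = u n :=
  (hu.comp Nat.succ_injective).extend_apply u id n

theorem shiftBack_apply_of_forall_ne {x : α} (hx : ∀ n, u (n + 1) ≠ x) : shiftBack u x = x :=
  extend_apply' _ _ _ fun ⟨n, hn⟩ ↦ hx n hn

theorem shiftBack_apply_zero (hu : Injective u) : shiftBack u (u 0) = u 0 :=
  shiftBack_apply_of_forall_ne fun n h ↦ Nat.succ_ne_zero n (hu h)

theorem image_shiftBack (hu : Injective u) (hus : ∀ n, u n ∈ s) : shiftBack u '' s = s := by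
  apply Subset.antisymm
  · rintro _ ⟨x, hx, rfl⟩
    by_cases h : ∃ n, u (n + 1) = x
    · obtain ⟨n, rfl⟩ := h
      rw [shiftBack_apply_succ hu]
      exact hus n
    · rwa [shiftBack_apply_of_forall_ne fun n hn ↦ h ⟨n, hn⟩]
  · intro y hy
    by_cases h : ∃ n, u n = y
    · obtain ⟨n, rfl⟩ := h
      exact ⟨u (n + 1), hus _, shiftBack_apply_succ hu n⟩
    · exact ⟨y, hy, shiftBack_apply_of_forall_ne fun n hn ↦ h ⟨n + 1, hn⟩⟩

theorem not_injOn_shiftBack (hu : Injective u) (hus : ∀ n, u n ∈ s) :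
    ¬InjOn (shiftBack u) s := by
  intro hinj
  have h01 : shiftBack u (u 0) = shiftBack u (u 1) := by
    rw [shiftBack_apply_zero hu, shiftBack_apply_succ hu]
  exact zero_ne_one (hu (hinj (hus 0) (hus 1) h01))

theorem Set.Infinite.exists_image_eq_not_injOn (hs : s.Infinite) :
    ∃ f : α → α, f '' s = s ∧ ¬InjOn f s := by
  let e := Set.Infinite.natEmbedding s hs
  have hu : Injective ((↑) ∘ e : ℕ → α) := Subtype.coe_injective.comp e.injective
  have hus : ∀ n, ((↑) ∘ e : ℕ → α) n ∈ s := fun n ↦ (e n).2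
  exact ⟨shiftBack _, image_shiftBack hu hus, not_injOn_shiftBack hu hus⟩

end ShiftBack

theorem stmt_2_general {X : Type*} (Y : Set X) :
    (∀ f : X → X, f '' Y = Y → ∃ g : X → X, g '' Y = Y ∧ f ∘ g ∘ f = f)
      ↔ Y.Finite := by
  refine ⟨fun hreg ↦ ?_, fun hY f hf ↦ hY.exists_image_eq_comp_comp_eq hf⟩
  by_contra hinf
  obtain ⟨f, hf, hnotinj⟩ := Set.Infinite.exists_image_eq_not_injOn hinf
  obtain ⟨g, hg, hfgf⟩ := hreg f hf
  have hinj := injOn_image_of_comp_comp_eq hfgf (hf.symm.subset.trans (image_subset_range f Y))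
  exact hnotinj (hg ▸ hinj)

theorem stmt_2 {X : Type*} [Nonempty X] (Y : Set X) (hY : Y.Nonempty) :
    (∀ f : X → X, f '' Y = Y → ∃ g : X → X, g '' Y = Y ∧ f ∘ g ∘ f = f)
      ↔ Y.Finite :=
  stmt_2_general Y
end

section
/- Let X be a nonempty set and Y ⊆ X nonempty. The monoid S̄(X,Y) = {f : X → X : f|_Y ∈ Sym(Y)} is unit-regular (every element is unit-regular) if and only if X \ Y is finite. -/
/-!
If `X \ Y` is finite and `f` permutes `Y`, a unit `g` with `f g f = f` is obtained by inverting
`f` on `Y` and, on the finite set `X \ Y`, sending each point of `f(X \ Y) \ Y` to one of its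
preimages and extending this injection to a permutation of `X \ Y`. If `X \ Y` is infinite, let
`f` be the identity on `Y` and an injective non-surjective map `φ` on `X \ Y`. A unit `g` preserving
`Y` preserves `X \ Y`, and `f g f = f` forces `g φ = id` there, so that `φ` would be the inverse of
the injective map `g` on `X \ Y`, hence surjective.
-/

open Function Set

theorem Function.Injective.surjective_of_comp_comp_eq {α β : Type*} {f : α → β} {g : β → α}
    (hf : Injective f) (hg : Injective g) (h : f ∘ g ∘ f = f) : Surjective f := by
  have hgf : ∀ a, g (f a) = a := fun a => hf (congrFun h a)
  exact fun b => ⟨g b, hg (hgf (g b))⟩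

theorem Infinite.exists_injective_not_surjective (α : Type*) [Infinite α] :
    ∃ φ : α → α, Injective φ ∧ ¬Surjective φ := by
  obtain ⟨e⟩ : Nonempty (Option α ≃ α) := Cardinal.eq.1 <| by
    rw [Cardinal.mk_option, Cardinal.add_one_eq (Cardinal.aleph0_le_mk α)]
  refine ⟨e ∘ some, e.injective.comp (Option.some_injective α), fun hs => ?_⟩
  obtain ⟨a, ha⟩ := hs (e none)
  exact Option.some_ne_none a (e.injective ha)

theorem Equiv.Perm.exists_apply_eq_of_mem_range {α β : Type*} [Finite α] (F ι : α → β)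
    (hι : Injective ι) : ∃ π : Perm α, ∀ a, ι a ∈ range F → F (π a) = ι a := by
  let D := {a // ι a ∈ range F}
  have hsec : ∀ d : D, F d.2.choose = ι d := fun d => d.2.choose_spec
  obtain ⟨π, hπ⟩ := Perm.exists_extending_pair (fun d : D => (d : α)) (fun d : D => d.2.choose)
    Subtype.val_injective fun d d' h =>
      Subtype.ext (hι (by rw [← hsec d, ← hsec d']; exact congrArg F h))
  exact ⟨π, fun a ha => (congrArg F (hπ ⟨a, ha⟩)).trans (hsec ⟨a, ha⟩)⟩

theorem exists_perm_comp_comp_eq_of_finite_compl {X : Type*} {Y : Set X} (hY : Yᶜ.Finite)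
    {f : X → X} (hf : BijOn f Y Y) : ∃ g : Equiv.Perm X, g '' Y = Y ∧ f ∘ g ∘ f = f := by
  classical
  have := hY.to_subtype
  obtain ⟨π, hπ⟩ := Equiv.Perm.exists_apply_eq_of_mem_range (fun c : ↥Yᶜ => f c) Subtype.val
    Subtype.val_injective
  let e := hf.equiv f
  let g : Equiv.Perm X := Equiv.Perm.subtypeCongr (p := (· ∈ Y)) e.symm π
  have he : ∀ y : ↥Y, f (e.symm y) = y := fun y => congrArg Subtype.val (e.apply_symm_apply y)
  refine ⟨g, Subset.antisymm (image_subset_iff.2 fun x hx => ?_) fun z hz => ?_,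
    funext fun x => ?_⟩
  · rw [mem_preimage, Equiv.Perm.subtypeCongr.left_apply _ _ hx]
    exact Subtype.property _
  · refine ⟨e ⟨z, hz⟩, (e ⟨z, hz⟩).2, ?_⟩
    rw [Equiv.Perm.subtypeCongr.left_apply_subtype, e.symm_apply_apply]
  · by_cases hfx : f x ∈ Y
    · rw [comp_apply, comp_apply, Equiv.Perm.subtypeCongr.left_apply _ _ hfx, he]
    · have hx : x ∉ Y := fun hx => hfx (hf.mapsTo hx)
      rw [comp_apply, comp_apply, Equiv.Perm.subtypeCongr.right_apply _ _ hfx]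
      exact hπ ⟨f x, hfx⟩ ⟨⟨x, hx⟩, rfl⟩

theorem exists_bijOn_forall_comp_comp_ne_of_infinite_compl {X : Type*} {Y : Set X}
    (hY : Yᶜ.Infinite) :
    ∃ f : X → X, BijOn f Y Y ∧ ∀ g : X → X, Injective g → g '' Y = Y → f ∘ g ∘ f ≠ f := by
  have := hY.to_subtype
  obtain ⟨φ, hφ, hφs⟩ := Infinite.exists_injective_not_surjective ↥Yᶜ
  classical
  let f : X → X := fun x => if h : x ∈ Y then x else φ ⟨x, h⟩
  have hfc : ∀ c : ↥Yᶜ, f c = φ c := fun c => dif_neg c.2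
  refine ⟨f, (bijOn_id Y).congr fun x hx => by simp [f, hx], fun g hg hgY hfg => hφs ?_⟩
  have hgc : MapsTo g Yᶜ Yᶜ := fun x hx hgx => by
    obtain ⟨y, hy, hxy⟩ := hgY.symm ▸ hgx
    exact hx (hg hxy ▸ hy)
  refine hφ.surjective_of_comp_comp_eq (hgc.restrict_inj.2 hg.injOn) (funext fun c => ?_)
  have hfgc : f (g (φ c)) = φ c := by simpa only [comp_apply, hfc c] using congrFun hfg c
  exact Subtype.ext ((hfc _).symm.trans hfgc)

theorem stmt_7_general {X : Type*} (Y : Set X) :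
    (∀ f : X → X, Set.BijOn f Y Y →
        ∃ g : X → X, Function.Bijective g ∧ g '' Y = Y ∧ f ∘ g ∘ f = f)
      ↔ (Yᶜ : Set X).Finite := by
  refine ⟨fun H => ?_, fun hY f hf => ?_⟩
  · by_contra hY
    obtain ⟨f, hf, hne⟩ := exists_bijOn_forall_comp_comp_ne_of_infinite_compl hY
    obtain ⟨g, hg, hgY, hfg⟩ := H f hf
    exact hne g hg.1 hgY hfg
  · obtain ⟨g, hgY, hfg⟩ := exists_perm_comp_comp_eq_of_finite_compl hY hf
    exact ⟨g, g.bijective, hgY, hfg⟩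

theorem stmt_7 {X : Type*} [Nonempty X] (Y : Set X) (hY : Y.Nonempty) :
    (∀ f : X → X, Set.BijOn f Y Y →
        ∃ g : X → X, Function.Bijective g ∧ g '' Y = Y ∧ f ∘ g ∘ f = f)
      ↔ (Yᶜ : Set X).Finite :=
  stmt_7_general Y
end

section
/- Let X be a nonempty set and Y ⊆ X nonempty. Green's relations D and J coincide on Ω̄(X,Y) = {f : X → X : f(Y) = Y} if and only if Y is finite. -/
/-- Membership in Ω̄(X,Y). -/
def OmegaBar {X : Type*} (Y : Set X) (f : X → X) : Prop := f '' Y = Y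

/-- Green's L-relation on the monoid Ω̄(X,Y) (composition left to right: f = hg means f = g ∘ h). -/
def GreenL {X : Type*} (Y : Set X) (f g : X → X) : Prop :=
  (∃ h : X → X, OmegaBar Y h ∧ f = g ∘ h) ∧ (∃ h' : X → X, OmegaBar Y h' ∧ g = f ∘ h')

/-- Green's R-relation on the monoid Ω̄(X,Y). -/
def GreenR {X : Type*} (Y : Set X) (f g : X → X) : Prop :=
  (∃ h : X → X, OmegaBar Y h ∧ f = h ∘ g) ∧ (∃ h' : X → X, OmegaBar Y h' ∧ g = h' ∘ f)

/-- Green's D-relation: D = L ∘ R. -/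
def GreenD {X : Type*} (Y : Set X) (f g : X → X) : Prop :=
  ∃ k : X → X, OmegaBar Y k ∧ GreenL Y f k ∧ GreenR Y k g

/-- Green's J-relation on the monoid Ω̄(X,Y). -/
def GreenJ {X : Type*} (Y : Set X) (f g : X → X) : Prop :=
  (∃ h h' : X → X, OmegaBar Y h ∧ OmegaBar Y h' ∧ f = h' ∘ g ∘ h) ∧
  (∃ k k' : X → X, OmegaBar Y k ∧ OmegaBar Y k' ∧ g = k' ∘ f ∘ k)

/-!
If `Y` is finite, every `f ∈ Ω̄(X,Y)` permutes `Y`, so `f` and `k` are `L`-related as soon as they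
have the same range. If `f J g`, then `range f` and `range g` have the same cardinality, hence so do
`range g \ Y` and `range f \ Y` as `Y` is finite; a bijection `σ` between them, extended by the
identity, gives `k = σ ∘ g`, which is `R`-related to `g` and has the range of `f`.

If `Y` is infinite, consider the values whose fibre in `Y` is infinite. `L`-related maps have the
same such values and `R`-related maps have as many, so their number is a `D`-invariant. It is not a
`J`-invariant: along a copy of `ℕ` in `Y`, let `f` fold all even numbers onto `0`, and `g` fold the
multiples of `4` onto `0` and the other even numbers onto `1`; each factors through the other.
-/

open Set Function Cardinal

section

variable {X : Type*} {Y : Set X} {f g h k : X → X}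

theorem omegaBar_of_eqOn_id (hf : EqOn f id Y) : OmegaBar Y f := hf.image_eq_self

theorem OmegaBar.comp (hf : OmegaBar Y f) (hg : OmegaBar Y g) : OmegaBar Y (f ∘ g) := by
  rw [OmegaBar, image_comp, hg, hf]

theorem OmegaBar.mapsTo (hf : OmegaBar Y f) : MapsTo f Y Y := fun _ hx => hf ▸ mem_image_of_mem f hx

theorem OmegaBar.subset_range (hf : OmegaBar Y f) : Y ⊆ range f :=
  hf.symm.subset.trans (image_subset_range f Y)

theorem GreenD.greenJ (hD : GreenD Y f g) : GreenJ Y f g := by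
  obtain ⟨k, -, ⟨⟨h, hh, hf⟩, ⟨h', hh', hk⟩⟩, ⟨⟨p, hp, hk'⟩, ⟨q, hq, hg⟩⟩⟩ := hD
  exact ⟨⟨h, p, hh, hp, by rw [hf, hk']; rfl⟩, ⟨h', q, hh', hq, by rw [hg, hk]⟩⟩

section FiniteCase

theorem OmegaBar.injOn (hY : Y.Finite) (hf : OmegaBar Y f) : InjOn f Y :=
  ((hY.surjOn_iff_bijOn_of_mapsTo hf.mapsTo).1 hf.symm.subset).injOn

theorem exists_omegaBar_eq_comp_of_range_subset (hY : Y.Finite) (hf : OmegaBar Y f)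
    (hk : OmegaBar Y k) (hfk : range f ⊆ range k) : ∃ h, OmegaBar Y h ∧ f = k ∘ h := by
  have hpre : ∀ x, ∃ y, k y = f x ∧ (f x ∈ Y → y ∈ Y) := by
    intro x
    by_cases hx : f x ∈ Y
    · obtain ⟨y, hy, hyx⟩ := hk.symm.subset hx
      exact ⟨y, hyx, fun _ => hy⟩
    · obtain ⟨y, hy⟩ := hfk (mem_range_self x)
      exact ⟨y, hy, fun h => absurd h hx⟩
  choose h hkh hhY using hpre
  have hfkh : f = k ∘ h := funext fun x => (hkh x).symm
  have hmaps : MapsTo h Y Y := fun x hx => hhY x (hf.mapsTo hx)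
  have hinj : InjOn h Y := (hfkh ▸ hf.injOn hY : InjOn (k ∘ h) Y).of_comp
  exact ⟨h, ((hY.injOn_iff_bijOn_of_mapsTo hmaps).1 hinj).image_eq, hfkh⟩

theorem greenL_of_range_eq (hY : Y.Finite) (hf : OmegaBar Y f) (hk : OmegaBar Y k)
    (hfk : range f = range k) : GreenL Y f k :=
  ⟨exists_omegaBar_eq_comp_of_range_subset hY hf hk hfk.subset,
    exists_omegaBar_eq_comp_of_range_subset hY hk hf hfk.symm.subset⟩

theorem mk_range_le_of_eq_comp {h h' : X → X} (hfg : f = h' ∘ g ∘ h) :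
    #(range f) ≤ #(range g) := by
  subst hfg
  calc #(range (h' ∘ g ∘ h)) ≤ #(h' '' range g) := by
        rw [range_comp]
        exact mk_le_mk_of_subset (image_mono (range_comp_subset_range h g))
    _ ≤ #(range g) := mk_image_le

theorem GreenJ.mk_range_eq (hJ : GreenJ Y f g) : #(range f) = #(range g) := by
  obtain ⟨⟨_, _, -, -, hf⟩, ⟨_, _, -, -, hg⟩⟩ := hJ
  exact (mk_range_le_of_eq_comp hf).antisymm (mk_range_le_of_eq_comp hg)

theorem Cardinal.mk_sdiff_eq_of_mk_eq {s t u : Set X} (hu : u.Finite) (hs : u ⊆ s) (ht : u ⊆ t)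
    (hst : #s = #t) : #(s \ u : Set X) = #(t \ u : Set X) :=
  Cardinal.eq_of_add_eq_add_right (by rw [mk_sdiff_add_mk hs, mk_sdiff_add_mk ht, hst])
    hu.lt_aleph0

namespace Equiv

variable {s t : Set X} (e : s ≃ t)

noncomputable def extendById : X → X := extend Subtype.val (fun a => (e a : X)) id

theorem extendById_apply_coe (a : s) : e.extendById a = e a :=
  Subtype.val_injective.extend_apply _ _ a

theorem extendById_apply_of_notMem {x : X} (hx : x ∉ s) : e.extendById x = x :=
  extend_apply' _ _ _ fun ⟨a, ha⟩ => hx (ha ▸ a.2)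

theorem image_extendById_union {u : Set X} (hsu : Disjoint s u) :
    e.extendById '' (s ∪ u) = t ∪ u := by
  have hu : e.extendById '' u = u :=
    EqOn.image_eq_self fun x hx => e.extendById_apply_of_notMem (hsu.notMem_of_mem_right hx)
  rw [image_union, hu]
  congr 1
  ext x
  constructor
  · rintro ⟨y, hy, rfl⟩
    exact (e.extendById_apply_coe ⟨y, hy⟩).symm ▸ (e ⟨y, hy⟩).2
  · intro hx
    exact ⟨e.symm ⟨x, hx⟩, (e.symm ⟨x, hx⟩).2, by rw [e.extendById_apply_coe, apply_symm_apply]⟩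

theorem leftInvOn_extendById : LeftInvOn e.symm.extendById e.extendById (s ∪ tᶜ) := by
  rintro x (hx | hx)
  · rw [e.extendById_apply_coe ⟨x, hx⟩, e.symm.extendById_apply_coe, symm_apply_apply]
  · by_cases hxs : x ∈ s
    · rw [e.extendById_apply_coe ⟨x, hxs⟩, e.symm.extendById_apply_coe, symm_apply_apply]
    · rw [e.extendById_apply_of_notMem hxs, e.symm.extendById_apply_of_notMem hx]

theorem omegaBar_extendById (hs : Disjoint s Y) : OmegaBar Y e.extendById :=
  omegaBar_of_eqOn_id fun _ hy => e.extendById_apply_of_notMem (hs.notMem_of_mem_right hy)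

end Equiv

theorem GreenJ.greenD (hY : Y.Finite) (hf : OmegaBar Y f) (hg : OmegaBar Y g)
    (hJ : GreenJ Y f g) : GreenD Y f g := by
  obtain ⟨e⟩ : Nonempty (↥(range g \ Y) ≃ ↥(range f \ Y)) := Cardinal.eq.mp <|
    mk_sdiff_eq_of_mk_eq hY hg.subset_range hf.subset_range hJ.mk_range_eq.symm
  have hσ := e.omegaBar_extendById disjoint_sdiff_left
  have hτ := e.symm.omegaBar_extendById disjoint_sdiff_left
  have hk : OmegaBar Y (e.extendById ∘ g) := hσ.comp hg
  refine ⟨e.extendById ∘ g, hk, greenL_of_range_eq hY hf hk ?_, ⟨e.extendById, hσ, rfl⟩,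
    ⟨e.symm.extendById, hτ, ?_⟩⟩
  · rw [range_comp]
    calc range f = range f \ Y ∪ Y := (sdiff_union_of_subset hf.subset_range).symm
      _ = e.extendById '' (range g \ Y ∪ Y) := (e.image_extendById_union disjoint_sdiff_left).symm
      _ = e.extendById '' range g := by rw [sdiff_union_of_subset hg.subset_range]
  · funext x
    by_cases hx : g x ∈ Y
    · exact (e.leftInvOn_extendById (Or.inr fun h => h.2 hx)).symm
    · exact (e.leftInvOn_extendById (Or.inl ⟨mem_range_self x, hx⟩)).symm

end FiniteCase

section InfiniteCase

def infiniteFibers {α β : Type*} (s : Set α) (f : α → β) : Set β := {b | (s ∩ f ⁻¹' {b}).Infinite}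

@[simp]
theorem mem_infiniteFibers_univ {α β : Type*} {f : α → β} {b : β} :
    b ∈ infiniteFibers univ f ↔ (f ⁻¹' {b}).Infinite := by
  simp [infiniteFibers]

theorem infiniteFibers_subset_of_eq_comp (hh : OmegaBar Y h) (hf : f = k ∘ h) :
    infiniteFibers Y k ⊆ infiniteFibers Y f := by
  intro v hv
  refine Infinite.of_image h (hv.mono ?_)
  rintro y ⟨hyY, hyv⟩
  obtain ⟨x, hx, rfl⟩ := hh.symm.subset hyY
  exact ⟨x, ⟨hx, by rw [mem_preimage, hf]; exact hyv⟩, rfl⟩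

theorem encard_infiniteFibers_le_of_eq_comp {p q : X → X} (hk : k = p ∘ g) (hg : g = q ∘ k) :
    (infiniteFibers Y g).encard ≤ (infiniteFibers Y k).encard := by
  have hqp : LeftInvOn q p (range g) := by
    rintro _ ⟨x, rfl⟩
    rw [← comp_apply (f := p), ← hk, ← comp_apply (f := q), ← hg]
  refine encard_le_encard_of_injOn (f := p) ?_ (hqp.injOn.mono ?_)
  · intro v hv
    refine hv.mono ?_
    rintro x ⟨hxY, hxv⟩
    exact ⟨hxY, by rw [mem_preimage, hk, comp_apply, hxv]; rfl⟩
  · intro v hv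
    obtain ⟨x, -, hx⟩ := hv.nonempty
    exact ⟨x, hx⟩

theorem GreenD.encard_infiniteFibers_le (hD : GreenD Y f g) :
    (infiniteFibers Y g).encard ≤ (infiniteFibers Y f).encard := by
  obtain ⟨k, -, ⟨⟨h, hh, hf⟩, -⟩, ⟨⟨p, -, hk⟩, ⟨q, -, hg⟩⟩⟩ := hD
  exact (encard_infiniteFibers_le_of_eq_comp hk hg).trans
    (encard_le_encard (infiniteFibers_subset_of_eq_comp hh hf))

variable {α : Type*} {c : α → X}

noncomputable def transferAlong (c : α → X) (s : α → α) : X → X := extend c (c ∘ s) id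

theorem transferAlong_apply (hc : Injective c) (s : α → α) (a : α) :
    transferAlong c s (c a) = c (s a) :=
  hc.extend_apply _ _ a

theorem transferAlong_apply_of_notMem (s : α → α) {x : X} (hx : x ∉ range c) :
    transferAlong c s x = x :=
  extend_apply' _ _ _ hx

theorem transferAlong_comp (hc : Injective c) (s t : α → α) :
    transferAlong c (s ∘ t) = transferAlong c s ∘ transferAlong c t := by
  funext x
  by_cases hx : x ∈ range c
  · obtain ⟨a, rfl⟩ := hx
    simp only [comp_apply, transferAlong_apply hc]
  · simp only [comp_apply, transferAlong_apply_of_notMem _ hx]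

theorem omegaBar_transferAlong (hc : Injective c) (hcY : range c ⊆ Y) {s : α → α}
    (hs : Surjective s) : OmegaBar Y (transferAlong c s) := by
  refine Subset.antisymm ?_ fun y hy => ?_
  · rintro _ ⟨y, hy, rfl⟩
    by_cases hyc : y ∈ range c
    · obtain ⟨a, rfl⟩ := hyc
      exact transferAlong_apply hc s a ▸ hcY (mem_range_self _)
    · rwa [transferAlong_apply_of_notMem s hyc]
  · by_cases hyc : y ∈ range c
    · obtain ⟨a, rfl⟩ := hyc
      obtain ⟨b, rfl⟩ := hs a
      exact ⟨c b, hcY (mem_range_self b), transferAlong_apply hc s b⟩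
    · exact ⟨y, hy, transferAlong_apply_of_notMem s hyc⟩

theorem infiniteFibers_transferAlong (hc : Injective c) (hcY : range c ⊆ Y) (s : α → α) :
    infiniteFibers Y (transferAlong c s) = c '' infiniteFibers univ s := by
  ext v
  constructor
  · intro hv
    have hsub : (Y ∩ transferAlong c s ⁻¹' {v}) \ {v} ⊆ c '' (s ⁻¹' (c ⁻¹' {v})) := by
      rintro x ⟨⟨-, hxv⟩, hxne⟩
      by_cases hx : x ∈ range c
      · obtain ⟨a, rfl⟩ := hx
        exact ⟨a, by rwa [mem_preimage, transferAlong_apply hc] at hxv, rfl⟩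
      · rw [mem_preimage, transferAlong_apply_of_notMem s hx] at hxv
        exact absurd hxv hxne
    have hinf := ((hv.sdiff (finite_singleton v)).mono hsub).of_image c
    obtain ⟨a, ha⟩ := hinf.nonempty
    refine ⟨s a, ?_, ha⟩
    rw [mem_infiniteFibers_univ]
    exact hinf.mono fun b hb => hc (hb.trans ha.symm)
  · rintro ⟨m, hm, rfl⟩
    rw [mem_infiniteFibers_univ] at hm
    refine (hm.image hc.injOn).mono ?_
    rintro _ ⟨a, ha, rfl⟩
    exact ⟨hcY (mem_range_self a), by rw [mem_preimage, transferAlong_apply hc, ha]; rfl⟩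

end InfiniteCase

section Folds

def foldEvens (n : ℕ) : ℕ := if n % 2 = 0 then 0 else n / 2 + 1

def foldEvensMod4 (n : ℕ) : ℕ := if n % 4 = 0 then 0 else if n % 4 = 2 then 1 else n / 2 + 2

def foldEvensMod4Factor (n : ℕ) : ℕ := if n % 4 = 0 then n / 2 else if n % 4 = 2 then 1 else n + 2

theorem foldEvens_eq_comp : foldEvens = (· - 1) ∘ foldEvensMod4 := by
  funext n
  simp only [foldEvens, foldEvensMod4, comp_apply]
  split_ifs <;> omega

theorem foldEvensMod4_eq_comp : foldEvensMod4 = foldEvens ∘ foldEvensMod4Factor := by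
  funext n
  simp only [foldEvens, foldEvensMod4, foldEvensMod4Factor, comp_apply]
  split_ifs <;> omega

theorem foldEvensMod4_surjective : Surjective foldEvensMod4
  | 0 => ⟨0, rfl⟩
  | 1 => ⟨2, rfl⟩
  | m + 2 => ⟨2 * m + 1, by simp only [foldEvensMod4]; split_ifs <;> omega⟩

theorem foldEvensMod4Factor_surjective : Surjective foldEvensMod4Factor := by
  intro m
  rcases Nat.even_or_odd' m with ⟨j, rfl | rfl⟩
  · exact ⟨4 * j, by simp only [foldEvensMod4Factor]; split_ifs <;> omega⟩
  · rcases j with _ | j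
    · exact ⟨2, rfl⟩
    · exact ⟨2 * j + 1, by simp only [foldEvensMod4Factor]; split_ifs <;> omega⟩

theorem encard_infiniteFibers_foldEvens_le_one : (infiniteFibers univ foldEvens).encard ≤ 1 := by
  refine (encard_le_encard fun m hm => ?_).trans (encard_singleton 0).le
  by_contra hm0
  refine hm ((finite_singleton (2 * m - 1)).subset ?_)
  rintro n ⟨-, hn⟩
  simp only [mem_preimage, mem_singleton_iff, foldEvens] at hn hm0 ⊢
  split_ifs at hn <;> omega

theorem two_le_encard_infiniteFibers_foldEvensMod4 :
    2 ≤ (infiniteFibers univ foldEvensMod4).encard := by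
  have hfiber (r : ℕ) (hr : r % 4 = 0 ∨ r % 4 = 2) :
      foldEvensMod4 r ∈ infiniteFibers univ foldEvensMod4 := by
    refine infinite_of_injective_forall_mem (f := fun j => 4 * j + r)
      (fun i j hij => by simp only at hij; omega) fun j => ⟨mem_univ _, ?_⟩
    simp only [mem_preimage, mem_singleton_iff, foldEvensMod4]
    split_ifs <;> omega
  refine (encard_pair zero_ne_one).symm.le.trans (encard_le_encard ?_)
  rintro _ (rfl | rfl)
  exacts [hfiber 0 (by omega), hfiber 2 (by omega)]

end Folds

theorem Set.Infinite.exists_greenJ_and_not_greenD (hY : Y.Infinite) :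
    ∃ f g, OmegaBar Y f ∧ OmegaBar Y g ∧ GreenJ Y f g ∧ ¬GreenD Y f g := by
  set c : ℕ → X := Subtype.val ∘ hY.natEmbedding Y
  have hc : Injective c := Subtype.val_injective.comp (hY.natEmbedding Y).injective
  have hcY : range c ⊆ Y := by
    rintro _ ⟨n, rfl⟩
    exact (hY.natEmbedding Y n).2
  have hpred := omegaBar_transferAlong hc hcY (s := (· - 1)) fun m => ⟨m + 1, rfl⟩
  have hfactor := omegaBar_transferAlong hc hcY foldEvensMod4Factor_surjective
  have hg := omegaBar_transferAlong hc hcY foldEvensMod4_surjective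
  have hfg : transferAlong c foldEvens =
      transferAlong c (· - 1) ∘ transferAlong c foldEvensMod4 := by
    rw [foldEvens_eq_comp, transferAlong_comp hc]
  have hgf : transferAlong c foldEvensMod4 =
      transferAlong c foldEvens ∘ transferAlong c foldEvensMod4Factor := by
    rw [foldEvensMod4_eq_comp, transferAlong_comp hc]
  refine ⟨_, _, hfg ▸ hpred.comp hg, hg,
    ⟨⟨id, _, image_id Y, hpred, hfg⟩, ⟨_, id, hfactor, image_id Y, hgf⟩⟩, fun hD => ?_⟩
  have hle := hD.encard_infiniteFibers_le
  rw [infiniteFibers_transferAlong hc hcY, infiniteFibers_transferAlong hc hcY,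
    hc.injOn.encard_image, hc.injOn.encard_image] at hle
  have := two_le_encard_infiniteFibers_foldEvensMod4.trans
    (hle.trans encard_infiniteFibers_foldEvens_le_one)
  norm_num at this

end

theorem stmt_17_general {X : Type*} (Y : Set X) :
    (∀ f g : X → X, OmegaBar Y f → OmegaBar Y g → (GreenD Y f g ↔ GreenJ Y f g))
      ↔ Y.Finite := by
  refine ⟨fun hDJ => not_infinite.1 fun hY => ?_,
    fun hY f g hf hg => ⟨GreenD.greenJ, GreenJ.greenD hY hf hg⟩⟩
  obtain ⟨f, g, hf, hg, hJ, hD⟩ := hY.exists_greenJ_and_not_greenD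
  exact hD ((hDJ f g hf hg).2 hJ)

theorem stmt_17 {X : Type*} [Nonempty X] (Y : Set X) (hY : Y.Nonempty) :
    (∀ f g : X → X, OmegaBar Y f → OmegaBar Y g → (GreenD Y f g ↔ GreenJ Y f g))
      ↔ Y.Finite :=
  stmt_17_general Y
end
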